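/- Let R = F_{q^a}[X;σ] with σ the q-Frobenius (so σ has order a on F_{q^a}), and let s ∈ R be nonzero. Then s is a total divisor of itself if and only if s = γ·c·X^k for some γ ∈ F_{q^a}, some k ≥ 0, and some monic polynomial c in the center Z(R) = F_q[X^a]. -/

import Mathlib

noncomputable section

variable {K : Type*} [Field K]

/-- The twisted shift operator `X` (sends `∑ aᵢ Yⁱ` to `∑ σ(aᵢ) Yⁱ⁺¹` on coefficient
sequences), realizing the indeterminate of the skew polynomial ring `K[X;σ]`. -/
def skewX (σ : K →+* K) : AddMonoid.End (ℕ → K) where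
  toFun v n := if n = 0 then 0 else σ (v (n - 1))
  map_zero' := by funext n; simp
  map_add' v w := by
    funext n
    by_cases h : n = 0 <;> simp [h, Pi.add_apply]

/-- Left multiplication by the constant `a`, realizing the embedding of `K`
into the skew polynomial ring `K[X;σ]`. -/
def skewC (a : K) : AddMonoid.End (ℕ → K) where
  toFun v n := a * v n
  map_zero' := by funext n; simp
  map_add' v w := by funext n; simp [Pi.add_apply, mul_add]

/-- The skew polynomial ring `K[X;σ]`, realized concretely as the subring of additive
endomorphisms of `ℕ → K` generated by the constants and the twisted shift. -/
def SkewPolyRing (σ : K →+* K) : Subring (AddMonoid.End (ℕ → K)) :=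
  Subring.closure (Set.range skewC ∪ {skewX σ})

/-- The indeterminate `X` as an element of `K[X;σ]`. -/
def Xel (σ : K →+* K) : SkewPolyRing σ :=
  ⟨skewX σ, Subring.subset_closure (Set.mem_union_right _ rfl)⟩

/-- The constant `a` as an element of `K[X;σ]`. -/
def Cel (σ : K →+* K) (a : K) : SkewPolyRing σ :=
  ⟨skewC a, Subring.subset_closure (Set.mem_union_left _ ⟨a, rfl⟩)⟩

/-- The `i`-th coefficient of a skew polynomial (read off by acting on the
delta sequence at `0`). -/
def coeffS (σ : K →+* K) (p : SkewPolyRing σ) (i : ℕ) : K :=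
  (p : AddMonoid.End (ℕ → K)) (fun n => if n = 0 then 1 else 0) i

/-- The degree of a skew polynomial. -/
def natDegS (σ : K →+* K) (p : SkewPolyRing σ) : ℕ :=
  sSup {i | coeffS σ p i ≠ 0}

/-- A skew polynomial is monic if its leading coefficient is `1`. -/
def MonicS (σ : K →+* K) (p : SkewPolyRing σ) : Prop :=
  coeffS σ p (natDegS σ p) = 1

/-- `s` left-divides `t`. -/
def LDvd (σ : K →+* K) (s t : SkewPolyRing σ) : Prop := ∃ u, t = s * u

/-- `s` right-divides `t`. -/
def RDvd (σ : K →+* K) (s t : SkewPolyRing σ) : Prop := ∃ u, t = u * s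

/-- `s` is a total divisor of `t`: `s` left-divides `u*t` and right-divides `t*u`
for every `u`. -/
def TotalDvd (σ : K →+* K) (s t : SkewPolyRing σ) : Prop :=
  ∀ u, LDvd σ s (u * t) ∧ RDvd σ s (t * u)

/-- `d` is the monic greatest common right divisor of `f` and `g`. -/
def IsGcrd (σ : K →+* K) (d f g : SkewPolyRing σ) : Prop :=
  MonicS σ d ∧ RDvd σ d f ∧ RDvd σ d g ∧ ∀ e, RDvd σ e f → RDvd σ e g → RDvd σ e d

/-- The two-sided ideal `RtR` generated by `t`, as an additive subgroup. -/
def TwoSidedGen (σ : K →+* K) (t : SkewPolyRing σ) : AddSubgroup (SkewPolyRing σ) :=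
  AddSubgroup.closure {x | ∃ r r', x = r * t * r'}

/-! A nonzero `s` is a total divisor of itself exactly when it is a normal element, `R s = s R`.
Nonzero constants are units, central elements are normal, and `X` is normal because `σ` is
bijective; hence `γ c Xᵏ` is normal. Conversely, write `s = t Xᵏ` with `t₀ ≠ 0`; as `R` is a
domain, `t` is again normal. Comparing coefficients in `α t = t β`, for a generator `α` of `Kˣ`,
shows that `t` is supported on multiples of `a`; comparing them in `X t = t (β X)` shows that `σ`
multiplies all coefficients of `t` by one common factor. So `t` divided by its leading
coefficient has `σ`-fixed coefficients in degrees divisible by `a`, and is central. -/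

section NormalElement

variable {M : Type*} [Monoid M]

def IsNormalElem (x : M) : Prop :=
  ∀ u, (∃ v, u * x = x * v) ∧ ∃ v, x * u = v * x

theorem isNormalElem_of_mem_center {x : M} (hx : x ∈ Set.center M) : IsNormalElem x := fun u =>
  ⟨⟨u, Semigroup.mem_center_iff.mp hx u⟩, ⟨u, (Semigroup.mem_center_iff.mp hx u).symm⟩⟩

theorem IsUnit.isNormalElem {x : M} (hx : IsUnit x) : IsNormalElem x := by
  obtain ⟨g, rfl⟩ := hx
  exact fun u => ⟨⟨↑g⁻¹ * u * g, by simp [← mul_assoc]⟩, ⟨g * u * ↑g⁻¹, by simp [mul_assoc]⟩⟩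

theorem IsNormalElem.mul {x y : M} (hx : IsNormalElem x) (hy : IsNormalElem y) :
    IsNormalElem (x * y) := by
  intro u
  obtain ⟨⟨v, hv⟩, -⟩ := hx u
  obtain ⟨⟨w, hw⟩, -⟩ := hy v
  obtain ⟨-, ⟨v', hv'⟩⟩ := hy u
  obtain ⟨-, ⟨w', hw'⟩⟩ := hx v'
  exact ⟨⟨w, by rw [← mul_assoc, hv, mul_assoc, hw, mul_assoc]⟩,
    ⟨w', by rw [mul_assoc, hv', ← mul_assoc, hw', mul_assoc]⟩⟩

theorem IsNormalElem.pow {x : M} (hx : IsNormalElem x) (n : ℕ) : IsNormalElem (x ^ n) := by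
  induction n with
  | zero => exact pow_zero x ▸ isNormalElem_of_mem_center (Set.one_mem_center)
  | succ n ih => exact pow_succ x n ▸ ih.mul hx

theorem IsNormalElem.of_mul_right {x y : M} (hxy : IsNormalElem (x * y)) (hy : IsNormalElem y)
    (hreg : IsRightRegular y) : IsNormalElem x := by
  intro u
  obtain ⟨⟨v, hv⟩, -⟩ := hxy u
  obtain ⟨-, ⟨w, hw⟩⟩ := hy v
  obtain ⟨⟨v', hv'⟩, -⟩ := hy u
  obtain ⟨-, ⟨w', hw'⟩⟩ := hxy v'
  refine ⟨⟨w, hreg ?_⟩, ⟨w', hreg ?_⟩⟩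
  · simp only [mul_assoc] at hv ⊢
    rw [hv, hw]
  · simp only [mul_assoc] at hw' ⊢
    rw [hv', hw']

end NormalElement

theorem totalDvd_self_iff_isNormalElem (σ : K →+* K) (s : SkewPolyRing σ) :
    TotalDvd σ s s ↔ IsNormalElem s :=
  Iff.rfl

theorem Nat.dvd_of_pow_sub_one_dvd_pow_sub_one {q a j : ℕ} (hq : 2 ≤ q)
    (h : q ^ a - 1 ∣ q ^ j - 1) : a ∣ j := by
  have hgcd := Nat.gcd_eq_left h
  rw [Nat.pow_sub_one_gcd_pow_sub_one] at hgcd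
  have h1 := Nat.one_le_pow (a.gcd j) q (by omega)
  have h2 := Nat.one_le_pow a q (by omega)
  rw [← Nat.pow_right_injective hq (show q ^ a.gcd j = q ^ a by omega)]
  exact Nat.gcd_dvd_right a j

section Frobenius

variable {σ : K →+* K} {q : ℕ}

theorem iterate_eq_pow_of_forall_eq_pow (hσ : ∀ x : K, σ x = x ^ q) (j : ℕ) (x : K) :
    σ^[j] x = x ^ q ^ j := by
  induction j generalizing x with
  | zero => simp
  | succ j ih => rw [Function.iterate_succ_apply, ih, hσ, ← pow_mul, ← pow_succ']

variable [Fintype K] {a : ℕ}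

theorem iterate_eq_self_of_dvd (hK : Fintype.card K = q ^ a) (hσ : ∀ x : K, σ x = x ^ q)
    {j : ℕ} (hj : a ∣ j) (x : K) : σ^[j] x = x := by
  have hid : σ^[a] = id :=
    funext fun y => by rw [iterate_eq_pow_of_forall_eq_pow hσ, ← hK, FiniteField.pow_card, id]
  obtain ⟨m, rfl⟩ := hj
  rw [Function.iterate_mul, hid, Function.iterate_id, id]

/-- A generator of `Kˣ` is fixed by no power `σʲ` with `a ∤ j`. -/
theorem exists_ne_zero_forall_iterate_eq_self_imp_dvd (hK : Fintype.card K = q ^ a)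
    (hσ : ∀ x : K, σ x = x ^ q) :
    ∃ α : K, α ≠ 0 ∧ ∀ j, σ^[j] α = α → a ∣ j := by
  have hq : 2 ≤ q := by
    by_contra! hq
    have := Fintype.one_lt_card (α := K)
    have := Nat.pow_le_pow_left (show q ≤ 1 by omega) a
    rw [one_pow] at this
    omega
  obtain ⟨g, hg⟩ := IsCyclic.exists_generator (α := Kˣ)
  refine ⟨g, g.ne_zero, fun j hj => Nat.dvd_of_pow_sub_one_dvd_pow_sub_one hq ?_⟩
  have horder : orderOf g = q ^ a - 1 := by
    rw [orderOf_eq_card_of_forall_mem_zpowers hg, Nat.card_units, Nat.card_eq_fintype_card, hK]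
  rw [← horder]
  apply orderOf_dvd_of_pow_eq_one
  have hfix : g ^ q ^ j = g :=
    Units.ext (by rw [Units.val_pow_eq_pow_val, ← iterate_eq_pow_of_forall_eq_pow hσ, hj])
  rwa [← Nat.sub_add_cancel (Nat.one_le_pow j q (by omega)), pow_succ, mul_eq_right] at hfix

end Frobenius

@[simp] theorem skewC_apply (a : K) (v : ℕ → K) (n : ℕ) : skewC a v n = a * v n := rfl

@[simp] theorem skewX_apply (σ : K →+* K) (v : ℕ → K) (n : ℕ) :
    skewX σ v n = if n = 0 then 0 else σ (v (n - 1)) := rfl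

namespace SkewPolyRing

variable (σ : K →+* K)

/-- The coefficient sequence of `(∑ cᵢ Xⁱ) * (∑ vₙ Xⁿ)`, using `Xⁱ b = σⁱ(b) Xⁱ`. -/
def skewConv (c v : ℕ → K) (n : ℕ) : K :=
  ∑ i ∈ Finset.range (n + 1), c i * σ^[i] (v (n - i))

theorem skewConv_assoc (c c' v : ℕ → K) :
    skewConv σ c (skewConv σ c' v) = skewConv σ (skewConv σ c c') v := by
  funext n
  have expand : ∀ i ∈ Finset.range (n + 1), c i * σ^[i] (skewConv σ c' v (n - i)) =
      ∑ l ∈ Finset.range (n + 1 - i), c i * σ^[i] (c' l) * σ^[i + l] (v (n - i - l)) := by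
    intro i hi
    rw [skewConv, ← RingHom.coe_pow, map_sum, Finset.mul_sum,
      Nat.sub_add_comm (Nat.lt_succ_iff.mp (Finset.mem_range.mp hi))]
    refine Finset.sum_congr rfl fun l _ => ?_
    rw [map_mul, RingHom.coe_pow, Function.iterate_add_apply, mul_assoc]
  rw [skewConv, Finset.sum_congr rfl expand, ← Finset.sum_range_diag_flip]
  refine Finset.sum_congr rfl fun m hm => ?_
  rw [skewConv, Finset.sum_mul]
  refine Finset.sum_congr rfl fun i hi => ?_
  simp only [Finset.mem_range] at hm hi
  rw [Nat.add_sub_cancel' (by omega), show n - i - (m - i) = n - m by omega]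

theorem skewConv_delta (c : ℕ → K) : skewConv σ c (fun n => if n = 0 then 1 else 0) = c := by
  funext n
  rw [skewConv, Finset.sum_eq_single n]
  · simp
  · intro i hi hin
    rw [if_neg (by simp at hi; omega), iterate_map_zero, mul_zero]
  · simp

def HasSkewCoeffs (f : AddMonoid.End (ℕ → K)) (c : ℕ → K) : Prop :=
  (∃ N, ∀ i, N ≤ i → c i = 0) ∧ ∀ v, f v = skewConv σ c v

theorem hasSkewCoeffs_skewC (a : K) :
    HasSkewCoeffs σ (skewC a) (fun i => if i = 0 then a else 0) := by
  refine ⟨⟨1, fun i hi => if_neg (by omega)⟩, fun v => funext fun n => ?_⟩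
  simp [skewConv]

theorem hasSkewCoeffs_skewX : HasSkewCoeffs σ (skewX σ) (fun i => if i = 1 then 1 else 0) := by
  refine ⟨⟨2, fun i hi => if_neg (by omega)⟩, fun v => funext fun n => ?_⟩
  cases n <;> simp [skewConv]

theorem hasSkewCoeffs_one : HasSkewCoeffs σ 1 (fun i => if i = 0 then 1 else 0) := by
  refine ⟨⟨1, fun i hi => if_neg (by omega)⟩, fun v => funext fun n => ?_⟩
  simp [skewConv]

theorem HasSkewCoeffs.add {f g : AddMonoid.End (ℕ → K)} {c d : ℕ → K}
    (hf : HasSkewCoeffs σ f c) (hg : HasSkewCoeffs σ g d) : HasSkewCoeffs σ (f + g) (c + d) := by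
  obtain ⟨⟨N, hN⟩, hfc⟩ := hf
  obtain ⟨⟨N', hN'⟩, hgd⟩ := hg
  refine ⟨⟨max N N', fun i hi => by simp [hN i (by omega), hN' i (by omega)]⟩,
    fun v => funext fun n => ?_⟩
  show f v n + g v n = _
  simp [skewConv, hfc, hgd, add_mul, Finset.sum_add_distrib]

theorem HasSkewCoeffs.neg {f : AddMonoid.End (ℕ → K)} {c : ℕ → K} (hf : HasSkewCoeffs σ f c) :
    HasSkewCoeffs σ (-f) (-c) := by
  obtain ⟨⟨N, hN⟩, hfc⟩ := hf
  refine ⟨⟨N, fun i hi => by simp [hN i hi]⟩, fun v => funext fun n => ?_⟩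
  show -f v n = _
  simp [skewConv, hfc]

theorem HasSkewCoeffs.mul {f g : AddMonoid.End (ℕ → K)} {c d : ℕ → K}
    (hf : HasSkewCoeffs σ f c) (hg : HasSkewCoeffs σ g d) :
    HasSkewCoeffs σ (f * g) (skewConv σ c d) := by
  obtain ⟨⟨N, hN⟩, hfc⟩ := hf
  obtain ⟨⟨N', hN'⟩, hgd⟩ := hg
  refine ⟨⟨N + N', fun j hj => Finset.sum_eq_zero fun i hi => ?_⟩, fun v => ?_⟩
  · by_cases h : N ≤ i
    · rw [hN i h, zero_mul]
    · rw [hN' (j - i) (by omega), iterate_map_zero, mul_zero]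
  · show f (g v) = _
    rw [hgd, hfc, skewConv_assoc]

theorem exists_hasSkewCoeffs (p : SkewPolyRing σ) : ∃ c, HasSkewCoeffs σ p c := by
  obtain ⟨p, hp⟩ := p
  induction hp using Subring.closure_induction with
  | mem f hf =>
    rcases hf with ⟨a, rfl⟩ | rfl
    · exact ⟨_, hasSkewCoeffs_skewC σ a⟩
    · exact ⟨_, hasSkewCoeffs_skewX σ⟩
  | zero => exact ⟨0, ⟨0, fun _ _ => rfl⟩, fun v => funext fun n => by simp [skewConv]⟩
  | one => exact ⟨_, hasSkewCoeffs_one σ⟩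
  | add f g _ _ hf hg =>
    obtain ⟨c, hc⟩ := hf
    obtain ⟨d, hd⟩ := hg
    exact ⟨_, hc.add σ hd⟩
  | neg f _ hf =>
    obtain ⟨c, hc⟩ := hf
    exact ⟨_, hc.neg σ⟩
  | mul f g _ _ hf hg =>
    obtain ⟨c, hc⟩ := hf
    obtain ⟨d, hd⟩ := hg
    exact ⟨_, hc.mul σ hd⟩

theorem hasSkewCoeffs_coeffS (p : SkewPolyRing σ) : HasSkewCoeffs σ p (coeffS σ p) := by
  obtain ⟨c, hc⟩ := exists_hasSkewCoeffs σ p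
  have hpc : coeffS σ p = c := by
    funext i
    show (p : AddMonoid.End (ℕ → K)) _ i = c i
    rw [hc.2, skewConv_delta]
  exact hpc ▸ hc

theorem exists_coeffS_eq_zero_of_le (p : SkewPolyRing σ) : ∃ N, ∀ i, N ≤ i → coeffS σ p i = 0 :=
  (hasSkewCoeffs_coeffS σ p).1

@[ext]
theorem ext_coeffS {p r : SkewPolyRing σ} (h : coeffS σ p = coeffS σ r) : p = r := by
  apply Subtype.ext
  ext v : 1
  rw [(hasSkewCoeffs_coeffS σ p).2, (hasSkewCoeffs_coeffS σ r).2, h]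

theorem coeffS_mul (p r : SkewPolyRing σ) :
    coeffS σ (p * r) = skewConv σ (coeffS σ p) (coeffS σ r) :=
  (hasSkewCoeffs_coeffS σ p).2 _

theorem coeffS_zero : coeffS σ (0 : SkewPolyRing σ) = 0 := rfl

theorem coeffS_one (i : ℕ) : coeffS σ (1 : SkewPolyRing σ) i = if i = 0 then 1 else 0 := rfl

theorem coeffS_add (p r : SkewPolyRing σ) : coeffS σ (p + r) = coeffS σ p + coeffS σ r := rfl

theorem coeffS_Cel (b : K) (i : ℕ) : coeffS σ (Cel σ b) i = if i = 0 then b else 0 := by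
  simp [coeffS, Cel]

theorem coeffS_Xel (i : ℕ) : coeffS σ (Xel σ) i = if i = 1 then 1 else 0 := by
  cases i <;> simp [coeffS, Xel]

theorem coeffS_Cel_mul (b : K) (p : SkewPolyRing σ) (j : ℕ) :
    coeffS σ (Cel σ b * p) j = b * coeffS σ p j := rfl

theorem coeffS_Xel_mul (p : SkewPolyRing σ) (j : ℕ) :
    coeffS σ (Xel σ * p) j = if j = 0 then 0 else σ (coeffS σ p (j - 1)) := rfl

theorem coeffS_mul_Cel (p : SkewPolyRing σ) (b : K) (j : ℕ) :
    coeffS σ (p * Cel σ b) j = coeffS σ p j * σ^[j] b := by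
  rw [coeffS_mul, skewConv, Finset.sum_eq_single j]
  · simp [coeffS_Cel]
  · intro i hi hij
    rw [coeffS_Cel, if_neg (by simp at hi; omega), iterate_map_zero, mul_zero]
  · simp

theorem coeffS_mul_Xel (p : SkewPolyRing σ) (j : ℕ) :
    coeffS σ (p * Xel σ) j = if j = 0 then 0 else coeffS σ p (j - 1) := by
  rw [coeffS_mul, skewConv]
  rcases Nat.eq_zero_or_pos j with rfl | hj
  · simp [coeffS_Xel]
  · rw [if_neg (by omega), Finset.sum_eq_single (j - 1)]
    · rw [coeffS_Xel, if_pos (by omega), iterate_map_one, mul_one]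
    · intro i hi hij
      rw [coeffS_Xel, if_neg (by simp at hi; omega), iterate_map_zero, mul_zero]
    · simp

theorem coeffS_mul_Xel_pow (p : SkewPolyRing σ) (d j : ℕ) :
    coeffS σ (p * Xel σ ^ d) j = if j < d then 0 else coeffS σ p (j - d) := by
  induction d generalizing j with
  | zero => simp
  | succ d ih =>
    rw [pow_succ, ← mul_assoc, coeffS_mul_Xel]
    rcases Nat.eq_zero_or_pos j with rfl | hj
    · simp
    · rw [if_neg (by omega), ih]
      by_cases h : j < d + 1
      · rw [if_pos (by omega), if_pos h]
      · rw [if_neg (by omega), if_neg h, Nat.sub_sub, Nat.add_comm]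

theorem coeffS_Cel_mul_Xel_pow (b : K) (d j : ℕ) :
    coeffS σ (Cel σ b * Xel σ ^ d) j = if j = d then b else 0 := by
  rw [coeffS_mul_Xel_pow, coeffS_Cel]
  by_cases h : j < d
  · rw [if_pos h, if_neg (by omega)]
  · rw [if_neg h]
    by_cases h' : j = d
    · simp [h']
    · rw [if_neg (by omega), if_neg h']

theorem coeffS_mul_Cel_mul_Xel_pow (p : SkewPolyRing σ) (b : K) (d j : ℕ) :
    coeffS σ (p * (Cel σ b * Xel σ ^ d)) j =
      if j < d then 0 else coeffS σ p (j - d) * σ^[j - d] b := by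
  rw [← mul_assoc, coeffS_mul_Xel_pow, coeffS_mul_Cel]

theorem Cel_mul (b b' : K) : Cel σ b * Cel σ b' = Cel σ (b * b') := by
  ext i
  rw [coeffS_Cel_mul, coeffS_Cel, coeffS_Cel]
  split_ifs <;> simp

theorem Cel_zero : Cel σ 0 = 0 := by
  ext i
  rw [coeffS_Cel, coeffS_zero]
  split_ifs <;> rfl

theorem Cel_one : Cel σ 1 = 1 := by
  ext i
  rw [coeffS_Cel, coeffS_one]

theorem coeffS_sum {ι : Type*} (t : Finset ι) (f : ι → SkewPolyRing σ) :
    coeffS σ (∑ i ∈ t, f i) = ∑ i ∈ t, coeffS σ (f i) :=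
  map_sum (⟨⟨coeffS σ, coeffS_zero σ⟩, coeffS_add σ⟩ : SkewPolyRing σ →+ (ℕ → K)) f t

theorem exists_coeffS_eq {c : ℕ → K} (hc : ∃ N, ∀ i, N ≤ i → c i = 0) :
    ∃ p : SkewPolyRing σ, coeffS σ p = c := by
  obtain ⟨N, hN⟩ := hc
  refine ⟨∑ i ∈ Finset.range N, Cel σ (c i) * Xel σ ^ i, funext fun j => ?_⟩
  simp only [coeffS_sum, Finset.sum_apply, coeffS_Cel_mul_Xel_pow, Finset.sum_ite_eq,
    Finset.mem_range]
  split_ifs with h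
  · rfl
  · exact (hN j (by omega)).symm

theorem eq_Cel_mul_Xel_pow {v : SkewPolyRing σ} {d : ℕ} (h : ∀ j, j ≠ d → coeffS σ v j = 0) :
    v = Cel σ (coeffS σ v d) * Xel σ ^ d := by
  ext j
  rw [coeffS_Cel_mul_Xel_pow]
  split_ifs with hj
  · rw [hj]
  · exact h j hj

theorem bddAbove_support (p : SkewPolyRing σ) : BddAbove {i | coeffS σ p i ≠ 0} := by
  obtain ⟨N, hN⟩ := exists_coeffS_eq_zero_of_le σ p
  exact ⟨N, fun i hi => by by_contra hc; exact hi (hN i (by omega))⟩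

theorem exists_coeffS_ne_zero {p : SkewPolyRing σ} (hp : p ≠ 0) : ∃ i, coeffS σ p i ≠ 0 := by
  by_contra! h
  exact hp (ext_coeffS σ (funext h))

theorem ne_zero_of_coeffS_ne_zero {p : SkewPolyRing σ} {i : ℕ} (h : coeffS σ p i ≠ 0) : p ≠ 0 :=
  fun hp => h (by rw [hp, coeffS_zero]; rfl)

theorem coeffS_natDegS_ne_zero {p : SkewPolyRing σ} (hp : p ≠ 0) :
    coeffS σ p (natDegS σ p) ≠ 0 :=
  Nat.sSup_mem (exists_coeffS_ne_zero σ hp) (bddAbove_support σ p)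

theorem le_natDegS {p : SkewPolyRing σ} {i : ℕ} (hi : coeffS σ p i ≠ 0) : i ≤ natDegS σ p :=
  le_csSup (bddAbove_support σ p) hi

theorem coeffS_eq_zero_of_natDegS_lt {p : SkewPolyRing σ} {i : ℕ} (hi : natDegS σ p < i) :
    coeffS σ p i = 0 := by
  by_contra h
  exact absurd (le_natDegS σ h) (by omega)

theorem natDegS_eq_of_coeffS {p : SkewPolyRing σ} {d : ℕ} (hd : coeffS σ p d ≠ 0)
    (hlt : ∀ j, d < j → coeffS σ p j = 0) : natDegS σ p = d :=
  le_antisymm (csSup_le ⟨d, hd⟩ fun i hi => not_lt.mp fun h => hi (hlt i h)) (le_natDegS σ hd)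

theorem coeffS_mul_natDegS_add (p r : SkewPolyRing σ) :
    coeffS σ (p * r) (natDegS σ p + natDegS σ r) =
      coeffS σ p (natDegS σ p) * σ^[natDegS σ p] (coeffS σ r (natDegS σ r)) := by
  rw [coeffS_mul, skewConv, Finset.sum_eq_single (natDegS σ p), Nat.add_sub_cancel_left]
  · intro i hi hip
    simp only [Finset.mem_range] at hi
    rcases Nat.lt_or_gt_of_ne hip with h | h
    · rw [coeffS_eq_zero_of_natDegS_lt σ (i := _ - i) (by omega), iterate_map_zero, mul_zero]
    · rw [coeffS_eq_zero_of_natDegS_lt σ h, zero_mul]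
  · simp

theorem coeffS_mul_of_natDegS_add_lt (p r : SkewPolyRing σ) {j : ℕ}
    (hj : natDegS σ p + natDegS σ r < j) : coeffS σ (p * r) j = 0 := by
  rw [coeffS_mul, skewConv]
  refine Finset.sum_eq_zero fun i hi => ?_
  by_cases h : i ≤ natDegS σ p
  · rw [coeffS_eq_zero_of_natDegS_lt σ (i := j - i) (by omega), iterate_map_zero, mul_zero]
  · rw [coeffS_eq_zero_of_natDegS_lt σ (by omega), zero_mul]

theorem coeffS_mul_natDegS_add_ne_zero {p r : SkewPolyRing σ} (hp : p ≠ 0) (hr : r ≠ 0) :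
    coeffS σ (p * r) (natDegS σ p + natDegS σ r) ≠ 0 := by
  rw [coeffS_mul_natDegS_add]
  refine mul_ne_zero (coeffS_natDegS_ne_zero σ hp) fun h => coeffS_natDegS_ne_zero σ hr ?_
  exact σ.injective.iterate _ (by rw [h, iterate_map_zero])

theorem natDegS_mul {p r : SkewPolyRing σ} (hp : p ≠ 0) (hr : r ≠ 0) :
    natDegS σ (p * r) = natDegS σ p + natDegS σ r :=
  natDegS_eq_of_coeffS σ (coeffS_mul_natDegS_add_ne_zero σ hp hr)
    fun _ hj => coeffS_mul_of_natDegS_add_lt σ p r hj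

instance : NoZeroDivisors (SkewPolyRing σ) where
  eq_zero_or_eq_zero_of_mul_eq_zero {p r} h := by
    by_contra! hpr
    exact coeffS_mul_natDegS_add_ne_zero σ hpr.1 hpr.2 (by rw [h, coeffS_zero]; rfl)

theorem Cel_ne_zero {b : K} (hb : b ≠ 0) : Cel σ b ≠ 0 := fun h =>
  hb (by simpa [coeffS_Cel, coeffS_zero] using congrFun (congrArg (coeffS σ) h) 0)

theorem natDegS_Cel {b : K} (hb : b ≠ 0) : natDegS σ (Cel σ b) = 0 :=
  natDegS_eq_of_coeffS σ (by simpa [coeffS_Cel]) fun j hj => by simp [coeffS_Cel, hj.ne']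

theorem natDegS_Xel : natDegS σ (Xel σ) = 1 :=
  natDegS_eq_of_coeffS σ (by simp [coeffS_Xel]) fun j hj => by simp [coeffS_Xel, hj.ne']

theorem Xel_ne_zero : Xel σ ≠ 0 := fun h =>
  one_ne_zero (α := K) (by simpa [coeffS_Xel, coeffS_zero] using congrFun (congrArg (coeffS σ) h) 1)

theorem isUnit_Cel {b : K} (hb : b ≠ 0) : IsUnit (Cel σ b) :=
  ⟨⟨Cel σ b, Cel σ b⁻¹, by rw [Cel_mul, mul_inv_cancel₀ hb, Cel_one],
    by rw [Cel_mul, inv_mul_cancel₀ hb, Cel_one]⟩, rfl⟩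

theorem isNormalElem_Xel (hσ : Function.Surjective σ) : IsNormalElem (Xel σ) := by
  let e := RingEquiv.ofBijective σ ⟨σ.injective, hσ⟩
  intro u
  obtain ⟨N, hN⟩ := exists_coeffS_eq_zero_of_le σ u
  obtain ⟨w, hw⟩ := exists_coeffS_eq σ (c := fun i => e.symm (coeffS σ u i))
    ⟨N, fun i hi => by simp [hN i hi]⟩
  obtain ⟨w', hw'⟩ := exists_coeffS_eq σ (c := fun i => σ (coeffS σ u i))
    ⟨N, fun i hi => by simp [hN i hi]⟩
  refine ⟨⟨w, ext_coeffS σ (funext fun j => ?_)⟩, ⟨w', ext_coeffS σ (funext fun j => ?_)⟩⟩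
  · rw [coeffS_mul_Xel, coeffS_Xel_mul, hw]
    exact if_congr Iff.rfl rfl (e.apply_symm_apply _).symm
  · rw [coeffS_mul_Xel, coeffS_Xel_mul, hw']

theorem mem_center_of_coeffS {c : SkewPolyRing σ} (hfix : ∀ j, σ (coeffS σ c j) = coeffS σ c j)
    (hsupp : ∀ j, coeffS σ c j ≠ 0 → ∀ x : K, σ^[j] x = x) :
    c ∈ Set.center (SkewPolyRing σ) := by
  refine Semigroup.mem_center_iff.mpr fun g => ext_coeffS σ (funext fun m => ?_)
  rw [coeffS_mul, coeffS_mul, skewConv, skewConv, ← Finset.sum_range_reflect]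
  refine Finset.sum_congr rfl fun i hi => ?_
  simp only [Finset.mem_range] at hi
  rw [show m + 1 - 1 - i = m - i by omega, show m - (m - i) = i by omega]
  by_cases hc : coeffS σ c i = 0
  · rw [hc, iterate_map_zero, mul_zero, zero_mul]
  · rw [Function.iterate_fixed (hfix i), hsupp i hc, mul_comm]

theorem natDegS_eq_of_mul_eq {p t v : SkewPolyRing σ} (hp : p ≠ 0) (ht : t ≠ 0)
    (h : p * t = t * v) : natDegS σ v = natDegS σ p := by
  have hv : v ≠ 0 := by
    rintro rfl
    exact mul_ne_zero hp ht (h.trans (mul_zero t))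
  have hdeg := natDegS_mul σ hp ht
  rw [h, natDegS_mul σ ht hv] at hdeg
  omega

theorem iterate_eq_self_of_Cel_mul_eq {t v : SkewPolyRing σ} (ht : coeffS σ t 0 ≠ 0) {α : K}
    (hα : α ≠ 0) (h : Cel σ α * t = t * v) {m : ℕ} (hm : coeffS σ t m ≠ 0) : σ^[m] α = α := by
  have hdeg := natDegS_eq_of_mul_eq σ (Cel_ne_zero σ hα) (ne_zero_of_coeffS_ne_zero σ ht) h
  rw [natDegS_Cel σ hα] at hdeg
  obtain ⟨β, rfl⟩ : ∃ β, v = Cel σ β * Xel σ ^ 0 :=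
    ⟨_, eq_Cel_mul_Xel_pow σ fun j hj => coeffS_eq_zero_of_natDegS_lt σ (by omega)⟩
  have hcoeff : ∀ i, α * coeffS σ t i = coeffS σ t i * σ^[i] β := fun i => by
    rw [← coeffS_Cel_mul, h, coeffS_mul_Cel_mul_Xel_pow]
    simp
  have hβ : β = α := mul_left_cancel₀ ht (by simpa [mul_comm] using (hcoeff 0).symm)
  exact mul_left_cancel₀ hm (by rw [← hβ, ← hcoeff, hβ, mul_comm])

theorem exists_forall_map_coeffS_eq_of_Xel_mul_eq {t v : SkewPolyRing σ}
    (ht : coeffS σ t 0 ≠ 0) (h : Xel σ * t = t * v) :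
    ∃ β, ∀ m, σ (coeffS σ t m) = coeffS σ t m * σ^[m] β := by
  have hdeg := natDegS_eq_of_mul_eq σ (Xel_ne_zero σ) (ne_zero_of_coeffS_ne_zero σ ht) h
  rw [natDegS_Xel] at hdeg
  have hv0 : coeffS σ v 0 = 0 := by
    have h0 := congrFun (congrArg (coeffS σ) h) 0
    simp only [coeffS_Xel_mul, coeffS_mul, skewConv] at h0
    simpa [ht] using h0.symm
  obtain ⟨β, rfl⟩ : ∃ β, v = Cel σ β * Xel σ ^ 1 := by
    refine ⟨_, eq_Cel_mul_Xel_pow σ fun j hj => ?_⟩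
    rcases j with _ | j
    · exact hv0
    · exact coeffS_eq_zero_of_natDegS_lt σ (by omega)
  refine ⟨β, fun m => ?_⟩
  have hm := congrFun (congrArg (coeffS σ) h) (m + 1)
  rw [coeffS_Xel_mul, coeffS_mul_Cel_mul_Xel_pow] at hm
  simpa using hm

theorem exists_eq_mul_Xel_pow {s : SkewPolyRing σ} (hs : s ≠ 0) :
    ∃ (t : SkewPolyRing σ) (k : ℕ), coeffS σ t 0 ≠ 0 ∧ s = t * Xel σ ^ k := by
  set k := sInf {i | coeffS σ s i ≠ 0}
  have hk : coeffS σ s k ≠ 0 := Nat.sInf_mem (exists_coeffS_ne_zero σ hs)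
  obtain ⟨N, hN⟩ := exists_coeffS_eq_zero_of_le σ s
  obtain ⟨t, ht⟩ := exists_coeffS_eq σ (c := fun j => coeffS σ s (j + k))
    ⟨N, fun j hj => hN _ (by omega)⟩
  refine ⟨t, k, by simpa [ht] using hk, ext_coeffS σ (funext fun j => ?_)⟩
  rw [coeffS_mul_Xel_pow, ht]
  split_ifs with hj
  · exact not_not.mp (Nat.notMem_of_lt_sInf hj)
  · show coeffS σ s j = coeffS σ s (j - k + k)
    rw [Nat.sub_add_cancel (not_lt.mp hj)]

theorem exists_eq_Cel_mul_of_isNormalElem [Fintype K] {q a : ℕ} (hK : Fintype.card K = q ^ a)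
    (hσ : ∀ x : K, σ x = x ^ q) {t : SkewPolyRing σ} (hnorm : IsNormalElem t)
    (ht : coeffS σ t 0 ≠ 0) :
    ∃ (γ : K) (c : SkewPolyRing σ),
      c ∈ Set.center (SkewPolyRing σ) ∧ MonicS σ c ∧ t = Cel σ γ * c := by
  obtain ⟨α, hα, hαdvd⟩ := exists_ne_zero_forall_iterate_eq_self_imp_dvd hK hσ
  have hsupp : ∀ m, coeffS σ t m ≠ 0 → a ∣ m := fun m hm =>
    hαdvd m (iterate_eq_self_of_Cel_mul_eq σ ht hα (hnorm (Cel σ α)).1.choose_spec hm)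
  obtain ⟨β, hβ⟩ := exists_forall_map_coeffS_eq_of_Xel_mul_eq σ ht (hnorm (Xel σ)).1.choose_spec
  have hfix : ∀ m, σ (coeffS σ t m) = coeffS σ t m * β := fun m => by
    by_cases hm : coeffS σ t m = 0
    · rw [hm, map_zero, zero_mul]
    · rw [hβ, iterate_eq_self_of_dvd hK hσ (hsupp m hm)]
  have hβ0 : β ≠ 0 := by
    rintro rfl
    exact ht (σ.injective (by rw [hfix, mul_zero, map_zero]))
  have ht0 := ne_zero_of_coeffS_ne_zero σ ht
  set γ := coeffS σ t (natDegS σ t)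
  have hγ : γ ≠ 0 := coeffS_natDegS_ne_zero σ ht0
  refine ⟨γ, Cel σ γ⁻¹ * t, mem_center_of_coeffS σ (fun j => ?_) (fun j hj => ?_), ?_, ?_⟩
  · rw [coeffS_Cel_mul, map_mul, map_inv₀, hfix, hfix, mul_inv, mul_assoc,
      mul_comm (coeffS σ t j), inv_mul_cancel_left₀ hβ0]
  · exact iterate_eq_self_of_dvd hK hσ (hsupp j (right_ne_zero_of_mul hj))
  · rw [MonicS, natDegS_mul σ (Cel_ne_zero σ (inv_ne_zero hγ)) ht0,
      natDegS_Cel σ (inv_ne_zero hγ), zero_add, coeffS_Cel_mul, inv_mul_cancel₀ hγ]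
  · rw [← mul_assoc, Cel_mul, mul_inv_cancel₀ hγ, Cel_one, one_mul]

end SkewPolyRing

theorem stmt10_general {K : Type*} [Field K] [Fintype K]
    (q a : ℕ) (hK : Fintype.card K = q ^ a)
    (σ : K →+* K) (hσ : ∀ x : K, σ x = x ^ q)
    (s : SkewPolyRing σ) (hs : s ≠ 0) :
    TotalDvd σ s s ↔
      ∃ (γ : K) (k : ℕ) (c : SkewPolyRing σ),
        c ∈ Set.center (SkewPolyRing σ) ∧ MonicS σ c ∧
          s = Cel σ γ * c * Xel σ ^ k := by
  rw [totalDvd_self_iff_isNormalElem]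
  have hX := SkewPolyRing.isNormalElem_Xel σ (Finite.surjective_of_injective σ.injective)
  constructor
  · intro hnorm
    obtain ⟨t, k, ht, rfl⟩ := SkewPolyRing.exists_eq_mul_Xel_pow σ hs
    have hXk : IsRightRegular (Xel σ ^ k) :=
      (IsRegular.of_ne_zero' (pow_ne_zero k (SkewPolyRing.Xel_ne_zero σ))).right
    have htnorm := hnorm.of_mul_right (hX.pow k) hXk
    obtain ⟨γ, c, hc, hmonic, rfl⟩ :=
      SkewPolyRing.exists_eq_Cel_mul_of_isNormalElem σ hK hσ htnorm ht
    exact ⟨γ, k, c, hc, hmonic, rfl⟩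
  · rintro ⟨γ, k, c, hc, -, rfl⟩
    have hγ : γ ≠ 0 := by
      rintro rfl
      exact hs (by rw [SkewPolyRing.Cel_zero, zero_mul, zero_mul])
    have hγc := (SkewPolyRing.isUnit_Cel σ hγ).isNormalElem.mul (isNormalElem_of_mem_center hc)
    exact hγc.mul (hX.pow k)

/-- In `R = K[X;σ]` with `K = F_{q^a}` and `σ` the `q`-Frobenius (of order `a`), a
nonzero `s` is a total divisor of itself iff `s = γ·c·X^k` for some `γ ∈ K`, `k ≥ 0`
and a monic central polynomial `c ∈ Z(R) = F_q[X^a]`. -/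
theorem stmt10 {K : Type*} [Field K] [Fintype K]
    (q a : ℕ) (hq : IsPrimePow q) (hK : Fintype.card K = q ^ a)
    (σ : K →+* K) (hσ : ∀ x : K, σ x = x ^ q)
    (s : SkewPolyRing σ) (hs : s ≠ 0) :
    TotalDvd σ s s ↔
      ∃ (γ : K) (k : ℕ) (c : SkewPolyRing σ),
        c ∈ Set.center (SkewPolyRing σ) ∧ MonicS σ c ∧
          s = Cel σ γ * c * Xel σ ^ k :=
  stmt10_general q a hK σ hσ s hs

end
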